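/- arXiv:1011.4632 — 3 statements merged into one kernel-verified Lean document; each statement's English description precedes it below -/
import Mathlib

section
/- Let A be an n×d real matrix of rank ρ with truncated SVD A_k = U_kΣ_kV_kᵀ, let k < min{n,d}, ε ∈ (0,1/3), γ ≥ 1, and let R be a d×t real matrix. Let X_opt minimize ‖A − XXᵀA‖_F² over all n×k indicator matrices. Suppose: (a) V_kᵀR has rank k and ‖(V_kᵀR)⁺‖₂ ≤ 1/(1−ε); (b) ‖A_k − AR(V_kᵀR)⁺V_kᵀ‖_F ≤ 4ε‖A − A_k‖_F; (c) ‖(I − X_optX_optᵀ)AR‖_F ≤ √(1+ε)·‖(I − X_optX_optᵀ)A‖_F; and (d) X̃ is an n×k indicator matrix with ‖(I − X̃X̃ᵀ)AR‖_F² ≤ γ‖(I − X_optX_optᵀ)AR‖_F². Then ‖(I − X̃X̃ᵀ)A_k‖_F ≤ √γ·(1 + 6.5ε)·‖(I − X_optX_optᵀ)A‖_F. -/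
/-!
Write `Π = 1 - X̃X̃ᵀ` and `A_k = ARP Vₖᵀ + (A_k - ARP Vₖᵀ)` with `P = (VₖᵀR)⁺`. Since `Vₖ` has
orthonormal columns, `‖Π ARP Vₖᵀ‖_F ≤ ‖P‖₂ ‖Π AR‖_F ≤ √γ √(1+ε)/(1-ε) ‖(1 - X_opt X_optᵀ)A‖_F`
by (a), (d) and (c). The projection `Π` does not increase the Frobenius norm, so by (b) the
second part is at most `4ε ‖A - A_k‖_F`, and `‖A - A_k‖_F ≤ ‖(1 - XXᵀ)A‖_F` for every
indicator matrix `X` (Eckart–Young for projections of trace at most `k`): in the singular basis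
`‖Xᵀ A‖_F² = ∑ cᵢ σᵢ²` with weights `cᵢ ∈ [0, 1]` summing to at most `k`, which is at most
`σ₀² + ⋯ + σ_{k-1}²`. Finally `√(1+ε)/(1-ε) ≤ 1 + 2.5ε` for `ε < 1/3`.
-/

open MeasureTheory
open scoped Matrix

/-- Frobenius norm of a real matrix. -/
noncomputable def frobNorm {m n : ℕ} (M : Matrix (Fin m) (Fin n) ℝ) : ℝ :=
  Real.sqrt (∑ i, ∑ j, (M i j) ^ 2)

/-- Spectral (operator) norm of a real matrix, viewed as a linear map between
Euclidean spaces. -/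
noncomputable def specNorm {m n : ℕ} (M : Matrix (Fin m) (Fin n) ℝ) : ℝ :=
  ‖LinearMap.toContinuousLinearMap (Matrix.toEuclideanLin M)‖

/-- `P` is the Moore–Penrose pseudoinverse of `M` (the four Penrose conditions;
such a `P` is unique). -/
def IsMoorePenrose {m n : ℕ} (M : Matrix (Fin m) (Fin n) ℝ)
    (P : Matrix (Fin n) (Fin m) ℝ) : Prop :=
  M * P * M = M ∧ P * M * P = P ∧ (M * P)ᵀ = M * P ∧ (P * M)ᵀ = P * M

/-- `X` is an `n × k` cluster indicator matrix: each row `i` has a single nonzero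
entry, in column `f i`, equal to `1/√(z_{f i})` where `z_j` is the number of rows
assigned to column `j`. -/
def IsIndicator {n k : ℕ} (X : Matrix (Fin n) (Fin k) ℝ) : Prop :=
  ∃ f : Fin n → Fin k, ∀ i j, X i j =
    if f i = j then 1 / Real.sqrt ((Finset.univ.filter fun i' => f i' = j).card) else 0

/-- The singular values of a `k × t` real matrix `M` (in some order): the square
roots of the eigenvalues of `M * Mᵀ`. -/
noncomputable def singVals {k t : ℕ} (M : Matrix (Fin k) (Fin t) ℝ) (i : Fin k) : ℝ :=
  Real.sqrt ((Matrix.isHermitian_mul_conjTranspose_self M).eigenvalues i)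

/-- The `d × t` random sign matrix with entries `±1/√t`, as a function of the
sample point `ω` (a `d × t` array of fair coins). -/
noncomputable def signMatrix (d t : ℕ) (ω : Fin d → Fin t → Bool) :
    Matrix (Fin d) (Fin t) ℝ :=
  Matrix.of fun i j => (if ω i j then (1 : ℝ) else -1) / Real.sqrt t

/-- The law of a `d × t` matrix of i.i.d. fair signs: the uniform probability
measure on all `d × t` sign patterns. -/
noncomputable def signMeasure (d t : ℕ) : Measure (Fin d → Fin t → Bool) :=
  (PMF.uniformOfFintype (Fin d → Fin t → Bool)).toMeasure

open Matrix

theorem sum_mul_le_sum_of_antitone {N k : ℕ} (hk : k ≤ N) {s : ℕ → ℝ} (hs : Antitone s)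
    (hs0 : 0 ≤ s k) {c : Fin N → ℝ} (hc0 : ∀ i, 0 ≤ c i) (hc1 : ∀ i, c i ≤ 1)
    (hc : ∑ i, c i ≤ k) :
    ∑ i, c i * s i ≤ ∑ i : Fin N, if (i : ℕ) < k then s i else 0 := by
  -- Pivot at `s k`: the top `k` weights can only lose against `s k`, the others only gain
  have hpivot : ∀ i : Fin N, c i * s i ≤
      (if (i : ℕ) < k then s i else 0) + s k * (c i - if (i : ℕ) < k then 1 else 0) := by
    intro i
    split_ifs with hik
    · nlinarith [hs hik.le, hc1 i]
    · nlinarith [hs (not_lt.mp hik), hc0 i]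
  calc ∑ i, c i * s i
      ≤ ∑ i : Fin N, ((if (i : ℕ) < k then s i else 0)
          + s k * (c i - if (i : ℕ) < k then 1 else 0)) := Finset.sum_le_sum fun i _ => hpivot i
    _ = (∑ i : Fin N, if (i : ℕ) < k then s i else 0) + s k * (∑ i, c i - k) := by
      rw [Finset.sum_add_distrib, ← Finset.mul_sum, Finset.sum_sub_distrib,
        Finset.sum_boole, Fin.card_filter_val_lt, min_eq_right hk]
    _ ≤ ∑ i : Fin N, if (i : ℕ) < k then s i else 0 := by
      nlinarith [mul_nonneg hs0 (sub_nonneg.mpr hc)]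

namespace Matrix

variable {d k l m n p : ℕ}

theorem frobNorm_nonneg (M : Matrix (Fin m) (Fin n) ℝ) : 0 ≤ frobNorm M :=
  Real.sqrt_nonneg _

theorem frobNorm_sq (M : Matrix (Fin m) (Fin n) ℝ) :
    frobNorm M ^ 2 = ∑ i, ∑ j, M i j ^ 2 :=
  Real.sq_sqrt (by positivity)

theorem frobNorm_sq_eq_trace (M : Matrix (Fin m) (Fin n) ℝ) :
    frobNorm M ^ 2 = trace (Mᵀ * M) := by
  rw [frobNorm_sq, Finset.sum_comm]
  simp [trace, mul_apply, sq]

theorem frobNorm_le_frobNorm_of_sq_le {M : Matrix (Fin m) (Fin n) ℝ}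
    {N : Matrix (Fin l) (Fin p) ℝ} (h : frobNorm M ^ 2 ≤ frobNorm N ^ 2) :
    frobNorm M ≤ frobNorm N :=
  (pow_le_pow_iff_left₀ (frobNorm_nonneg M) (frobNorm_nonneg N) two_ne_zero).mp h

theorem frobNorm_le_sqrt_mul_of_sq_le {M : Matrix (Fin m) (Fin n) ℝ}
    {N : Matrix (Fin l) (Fin p) ℝ} {γ : ℝ} (h : frobNorm M ^ 2 ≤ γ * frobNorm N ^ 2) :
    frobNorm M ≤ √γ * frobNorm N := by
  have h' := Real.sqrt_le_sqrt h
  rwa [Real.sqrt_sq (frobNorm_nonneg _), Real.sqrt_mul' γ (sq_nonneg _),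
    Real.sqrt_sq (frobNorm_nonneg _)] at h'

section Frobenius

attribute [local instance] Matrix.frobeniusNormedAddCommGroup

theorem frobNorm_eq_norm (M : Matrix (Fin m) (Fin n) ℝ) : frobNorm M = ‖M‖ := by
  simp [frobNorm, frobenius_norm_def, Real.sqrt_eq_rpow]

theorem frobNorm_transpose (M : Matrix (Fin m) (Fin n) ℝ) : frobNorm Mᵀ = frobNorm M := by
  simp only [frobNorm_eq_norm, frobenius_norm_transpose]

theorem frobNorm_add_le (M N : Matrix (Fin m) (Fin n) ℝ) :
    frobNorm (M + N) ≤ frobNorm M + frobNorm N := by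
  simpa only [frobNorm_eq_norm] using norm_add_le M N

end Frobenius

open scoped Matrix.Norms.L2Operator in
theorem frobNorm_mul_le_specNorm_mul (M : Matrix (Fin m) (Fin n) ℝ)
    (P : Matrix (Fin n) (Fin p) ℝ) : frobNorm (M * P) ≤ specNorm P * frobNorm M := by
  have hrow : ∀ i, ∑ j, (M * P) i j ^ 2 ≤ specNorm P ^ 2 * ∑ j, M i j ^ 2 := by
    intro i
    have h := l2_opNorm_mulVec Pᵀ (WithLp.toLp 2 (M i))
    have hT : ‖Pᵀ‖ = specNorm P := by
      rw [← conjTranspose_eq_transpose_of_trivial, l2_opNorm_conjTranspose]; rfl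
    rw [hT] at h
    have h2 := pow_le_pow_left₀ (norm_nonneg _) h 2
    rw [mul_pow, EuclideanSpace.real_norm_sq_eq, EuclideanSpace.real_norm_sq_eq] at h2
    simpa [mul_apply, mulVec, dotProduct, mul_comm] using h2
  refine (pow_le_pow_iff_left₀ (frobNorm_nonneg _)
    (mul_nonneg (norm_nonneg _) (frobNorm_nonneg M)) two_ne_zero).mp ?_
  rw [mul_pow, frobNorm_sq, frobNorm_sq, Finset.mul_sum]
  exact Finset.sum_le_sum fun i _ => hrow i

theorem frobNorm_eq_frobNorm_of_sq_eq {M : Matrix (Fin m) (Fin n) ℝ}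
    {N : Matrix (Fin l) (Fin p) ℝ} (h : frobNorm M ^ 2 = frobNorm N ^ 2) :
    frobNorm M = frobNorm N :=
  (pow_left_inj₀ (frobNorm_nonneg M) (frobNorm_nonneg N) two_ne_zero).mp h

theorem frobNorm_mul_of_transpose_mul_self {U : Matrix (Fin l) (Fin m) ℝ} (hU : Uᵀ * U = 1)
    (M : Matrix (Fin m) (Fin n) ℝ) : frobNorm (U * M) = frobNorm M := by
  refine frobNorm_eq_frobNorm_of_sq_eq ?_
  rw [frobNorm_sq_eq_trace, frobNorm_sq_eq_trace, transpose_mul, Matrix.mul_assoc,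
    ← Matrix.mul_assoc Uᵀ, hU, Matrix.one_mul]

theorem frobNorm_mul_transpose_of_transpose_mul_self {V : Matrix (Fin l) (Fin n) ℝ}
    (hV : Vᵀ * V = 1) (M : Matrix (Fin m) (Fin n) ℝ) : frobNorm (M * Vᵀ) = frobNorm M := by
  rw [← frobNorm_transpose, transpose_mul, transpose_transpose,
    frobNorm_mul_of_transpose_mul_self hV, frobNorm_transpose]

theorem frobNorm_sq_one_sub_mul {X : Matrix (Fin m) (Fin k) ℝ} (hX : X * (Xᵀ * X) = X)
    (M : Matrix (Fin m) (Fin n) ℝ) :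
    frobNorm ((1 - X * Xᵀ) * M) ^ 2 = frobNorm M ^ 2 - frobNorm (Xᵀ * M) ^ 2 := by
  have hproj : (1 - X * Xᵀ)ᵀ * (1 - X * Xᵀ) = 1 - X * Xᵀ := by
    have hQ : X * Xᵀ * (X * Xᵀ) = X * Xᵀ := by
      rw [Matrix.mul_assoc, ← Matrix.mul_assoc Xᵀ, ← Matrix.mul_assoc, hX]
    simp [transpose_sub, transpose_mul, sub_mul, mul_sub, hQ]
  rw [frobNorm_sq_eq_trace, frobNorm_sq_eq_trace, frobNorm_sq_eq_trace, transpose_mul,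
    Matrix.mul_assoc, ← Matrix.mul_assoc _ (1 - X * Xᵀ), hproj]
  simp [Matrix.mul_sub, Matrix.sub_mul, transpose_mul, Matrix.mul_assoc, trace_sub]

theorem frobNorm_one_sub_mul_le {X : Matrix (Fin m) (Fin k) ℝ} (hX : X * (Xᵀ * X) = X)
    (M : Matrix (Fin m) (Fin n) ℝ) : frobNorm ((1 - X * Xᵀ) * M) ≤ frobNorm M :=
  frobNorm_le_frobNorm_of_sq_le <| by
    rw [frobNorm_sq_one_sub_mul hX]
    linarith [sq_nonneg (frobNorm (Xᵀ * M))]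

theorem frobNorm_one_sub_mul_le_specNorm_mul_add {X : Matrix (Fin m) (Fin k) ℝ}
    (hX : X * (Xᵀ * X) = X) {V : Matrix (Fin d) (Fin l) ℝ} (hV : Vᵀ * V = 1)
    (M : Matrix (Fin m) (Fin d) ℝ) (B : Matrix (Fin m) (Fin n) ℝ) (P : Matrix (Fin n) (Fin l) ℝ) :
    frobNorm ((1 - X * Xᵀ) * M) ≤
      specNorm P * frobNorm ((1 - X * Xᵀ) * B) + frobNorm (M - B * P * Vᵀ) := by
  have hsplit : (1 - X * Xᵀ) * M = (1 - X * Xᵀ) * B * P * Vᵀ + (1 - X * Xᵀ) * (M - B * P * Vᵀ) := by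
    rw [Matrix.mul_sub]
    simp only [Matrix.mul_assoc]
    abel
  rw [hsplit]
  refine (frobNorm_add_le _ _).trans (add_le_add ?_ (frobNorm_one_sub_mul_le hX _))
  rw [frobNorm_mul_transpose_of_transpose_mul_self hV]
  exact frobNorm_mul_le_specNorm_mul _ P

theorem submatrix_id_transpose_mul_self {W : Matrix (Fin d) (Fin d) ℝ} (hW : Wᵀ * W = 1)
    {e : Fin k → Fin d} (he : Function.Injective e) :
    (W.submatrix id e)ᵀ * W.submatrix id e = 1 := by
  rw [transpose_submatrix, ← submatrix_mul _ _ _ _ _ Function.bijective_id, hW,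
    submatrix_one _ he]

theorem diag_mul_transpose_nonneg (Y : Matrix (Fin n) (Fin p) ℝ) (i : Fin n) :
    0 ≤ (Y * Yᵀ) i i := by
  rw [mul_apply]
  exact Finset.sum_nonneg fun j _ => mul_self_nonneg (Y i j)

theorem diag_mul_transpose_le_one {Y : Matrix (Fin n) (Fin p) ℝ} (hY : Y * (Yᵀ * Y) = Y)
    (i : Fin n) : (Y * Yᵀ) i i ≤ 1 := by
  set Q := Y * Yᵀ
  have hQQ : Q * Q = Q := by
    simp only [Q, ← Matrix.mul_assoc]
    rw [Matrix.mul_assoc Y, hY]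
  have hQT : Qᵀ = Q := by simp [Q, transpose_mul]
  have hsq : Q i i ^ 2 ≤ Q i i :=
    calc Q i i ^ 2 ≤ ∑ m, Q i m ^ 2 :=
          Finset.single_le_sum (f := fun m => Q i m ^ 2) (fun _ _ => sq_nonneg _)
            (Finset.mem_univ i)
      _ = Q i i := by
          conv_rhs => rw [← hQQ, mul_apply]
          refine Finset.sum_congr rfl fun m _ => ?_
          rw [sq, ← transpose_apply Q m i, hQT]
  nlinarith [diag_mul_transpose_nonneg Y i]

def rectDiagonal (n d : ℕ) (s : ℕ → ℝ) : Matrix (Fin n) (Fin d) ℝ :=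
  of fun i j => if (i : ℕ) = j then s i else 0

theorem rectDiagonal_ite_lt (s : ℕ → ℝ) (k : ℕ) :
    rectDiagonal n d (fun m => if m < k then s m else 0) =
      of fun (i : Fin n) (j : Fin d) => if (i : ℕ) = j ∧ (i : ℕ) < k then s i else 0 := by
  ext i j
  simp [rectDiagonal, ite_and]

theorem rectDiagonal_mul_transpose (s : ℕ → ℝ) :
    rectDiagonal n d s * (rectDiagonal n d s)ᵀ =
      diagonal fun i : Fin n => if (i : ℕ) < d then s i ^ 2 else 0 := by
  ext i i'
  rw [mul_apply, diagonal_apply]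
  by_cases hid : (i : ℕ) < d
  · rw [Finset.sum_eq_single ⟨i, hid⟩]
    · by_cases hii : i = i'
      · subst hii; simp [rectDiagonal, hid, sq]
      · simp [rectDiagonal, hii, Fin.val_eq_val, Ne.symm hii]
    · intro j _ hj
      simp [rectDiagonal, show (i : ℕ) ≠ j from fun h => hj (Fin.ext h.symm)]
    · simp
  · rw [Finset.sum_eq_zero fun j _ => by
      simp [rectDiagonal, show (i : ℕ) ≠ j from fun h => hid (h ▸ j.isLt)]]
    simp [hid]

theorem frobNorm_sq_transpose_mul_rectDiagonal (Y : Matrix (Fin n) (Fin p) ℝ) (s : ℕ → ℝ) :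
    frobNorm (Yᵀ * rectDiagonal n d s) ^ 2 =
      ∑ i : Fin n, (Y * Yᵀ) i i * if (i : ℕ) < d then s i ^ 2 else 0 := by
  rw [frobNorm_sq_eq_trace, transpose_mul, transpose_transpose, Matrix.mul_assoc,
    trace_mul_comm, Matrix.mul_assoc, Matrix.mul_assoc, rectDiagonal_mul_transpose,
    ← Matrix.mul_assoc]
  simp [trace, mul_diagonal]

theorem frobNorm_sq_rectDiagonal (s : ℕ → ℝ) :
    frobNorm (rectDiagonal n d s) ^ 2 = ∑ i : Fin n, if (i : ℕ) < d then s i ^ 2 else 0 := by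
  simpa using frobNorm_sq_transpose_mul_rectDiagonal (d := d) (1 : Matrix (Fin n) (Fin n) ℝ) s

theorem frobNorm_rectDiagonal_sub_le {σ : ℕ → ℝ} (hσ : Antitone σ) (hσ0 : ∀ m, 0 ≤ σ m)
    (hk : k ≤ n) {Y : Matrix (Fin n) (Fin p) ℝ} (hY : Y * (Yᵀ * Y) = Y)
    (htr : trace (Yᵀ * Y) ≤ k) :
    frobNorm (rectDiagonal n d σ - rectDiagonal n d fun m => if m < k then σ m else 0) ≤
      frobNorm ((1 - Y * Yᵀ) * rectDiagonal n d σ) := by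
  set r : ℕ → ℝ := fun m => if m < d then σ m ^ 2 else 0
  have hr : Antitone r := fun a b hab => by
    by_cases hb : b < d
    · simp only [r, hb, lt_of_le_of_lt hab hb, if_true]
      exact pow_le_pow_left₀ (hσ0 b) (hσ hab) 2
    · simp only [r, hb, if_false]
      split_ifs <;> positivity
  have hsub : (rectDiagonal n d σ - rectDiagonal n d fun m => if m < k then σ m else 0) =
      rectDiagonal n d fun m => if m < k then 0 else σ m := by
    ext i j
    simp only [rectDiagonal, sub_apply, of_apply]
    split_ifs <;> ring
  have htail : ∑ i : Fin n, (if (i : ℕ) < d then (if (i : ℕ) < k then 0 else σ i) ^ 2 else 0) =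
      ∑ i : Fin n, r i - ∑ i : Fin n, if (i : ℕ) < k then r i else 0 := by
    rw [← Finset.sum_sub_distrib]
    refine Finset.sum_congr rfl fun i _ => ?_
    simp only [r]
    split_ifs <;> ring
  have hmaj := sum_mul_le_sum_of_antitone hk hr (by positivity)
    (diag_mul_transpose_nonneg Y) (diag_mul_transpose_le_one hY)
    (by rwa [← trace_mul_comm] at htr)
  refine frobNorm_le_frobNorm_of_sq_le ?_
  rw [hsub, frobNorm_sq_one_sub_mul hY, frobNorm_sq_rectDiagonal, frobNorm_sq_rectDiagonal,
    frobNorm_sq_transpose_mul_rectDiagonal, htail]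
  linarith

theorem frobNorm_sub_truncation_le {U : Matrix (Fin n) (Fin n) ℝ} {W : Matrix (Fin d) (Fin d) ℝ}
    (hU : Uᵀ * U = 1) (hW : Wᵀ * W = 1) {σ : ℕ → ℝ} (hσ : Antitone σ) (hσ0 : ∀ m, 0 ≤ σ m)
    (hk : k ≤ n) {X : Matrix (Fin n) (Fin p) ℝ} (hX : X * (Xᵀ * X) = X)
    (htr : trace (Xᵀ * X) ≤ k) :
    frobNorm (U * rectDiagonal n d σ * Wᵀ -
        U * rectDiagonal n d (fun m => if m < k then σ m else 0) * Wᵀ) ≤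
      frobNorm ((1 - X * Xᵀ) * (U * rectDiagonal n d σ * Wᵀ)) := by
  have hUUt : U * Uᵀ = 1 := mul_eq_one_comm.mp hU
  set Y := Uᵀ * X
  have hUY : U * Y = X := by rw [← Matrix.mul_assoc, hUUt, Matrix.one_mul]
  have hYY : Yᵀ * Y = Xᵀ * X := by
    simp only [Y, transpose_mul, transpose_transpose, Matrix.mul_assoc]
    rw [← Matrix.mul_assoc U, hUUt, Matrix.one_mul]
  have hY : Y * (Yᵀ * Y) = Y := by
    rw [hYY, Matrix.mul_assoc, hX]
  have hconj : (1 - X * Xᵀ) * U = U * (1 - Y * Yᵀ) := by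
    rw [← hUY, transpose_mul, Matrix.sub_mul, Matrix.mul_sub, Matrix.one_mul, Matrix.mul_one]
    simp only [Matrix.mul_assoc, hU, Matrix.mul_one]
  have hR : (1 - X * Xᵀ) * (U * rectDiagonal n d σ * Wᵀ) =
      U * ((1 - Y * Yᵀ) * rectDiagonal n d σ) * Wᵀ := by
    rw [← Matrix.mul_assoc, ← Matrix.mul_assoc, hconj]
    simp only [Matrix.mul_assoc]
  rw [← Matrix.sub_mul, ← Matrix.mul_sub, hR, frobNorm_mul_transpose_of_transpose_mul_self hW,
    frobNorm_mul_transpose_of_transpose_mul_self hW, frobNorm_mul_of_transpose_mul_self hU,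
    frobNorm_mul_of_transpose_mul_self hU]
  exact frobNorm_rectDiagonal_sub_le hσ hσ0 hk hY (hYY ▸ htr)

end Matrix

namespace IsIndicator

variable {n k : ℕ} {X : Matrix (Fin n) (Fin k) ℝ}

/- Empty clusters give zero columns, so `Xᵀ * X` is a diagonal 0/1 matrix rather than `1`. -/
theorem exists_transpose_mul_self_eq (hX : IsIndicator X) :
    ∃ f : Fin n → Fin k, (∀ i j, f i ≠ j → X i j = 0) ∧
      Xᵀ * X = diagonal fun j => if ∃ i, f i = j then 1 else 0 := by
  obtain ⟨f, hf⟩ := hX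
  refine ⟨f, fun i j h => by simp [hf, h], ?_⟩
  ext j j'
  rw [mul_apply, diagonal_apply]
  by_cases hjj : j = j'
  · subst hjj
    set z := (Finset.univ.filter fun i' => f i' = j).card
    have hsq : ∀ i, Xᵀ j i * X i j = if f i = j then (z : ℝ)⁻¹ else 0 := fun i => by
      rw [transpose_apply, hf]
      split_ifs <;> simp [← mul_inv, Real.mul_self_sqrt, z]
    rw [Finset.sum_congr rfl fun i _ => hsq i, ← Finset.sum_filter, Finset.sum_const,
      nsmul_eq_mul, if_pos rfl]
    by_cases hz : z = 0
    · have : ¬∃ i, f i = j := fun ⟨i, hi⟩ =>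
        (Finset.card_pos.mpr ⟨i, Finset.mem_filter.mpr ⟨Finset.mem_univ i, hi⟩⟩).ne' hz
      simp [hz, this]
    · obtain ⟨i, hi⟩ := Finset.card_ne_zero.mp hz
      rw [mul_inv_cancel₀ (Nat.cast_ne_zero.mpr hz), if_pos ⟨i, (Finset.mem_filter.mp hi).2⟩]
  · refine (Finset.sum_eq_zero fun i _ => ?_).trans (if_neg hjj).symm
    rw [transpose_apply, hf, hf]
    split_ifs with h h' <;> first | rfl | exact absurd (h.symm.trans h') hjj | simp

theorem mul_transpose_mul_self (hX : IsIndicator X) : X * (Xᵀ * X) = X := by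
  obtain ⟨f, hzero, hgram⟩ := hX.exists_transpose_mul_self_eq
  ext i j
  rw [hgram, mul_diagonal]
  by_cases h : f i = j
  · simp [show ∃ i', f i' = j from ⟨i, h⟩]
  · simp [hzero i j h]

theorem trace_transpose_mul_self_le (hX : IsIndicator X) : trace (Xᵀ * X) ≤ k := by
  obtain ⟨f, -, hgram⟩ := hX.exists_transpose_mul_self_eq
  rw [hgram, trace_diagonal]
  calc _ ≤ ∑ _j : Fin k, (1 : ℝ) := Finset.sum_le_sum fun j _ => by split_ifs <;> norm_num
    _ = k := by simp

end IsIndicator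

theorem Real.sqrt_one_add_div_one_sub_le {ε : ℝ} (hε0 : 0 ≤ ε) (hε : ε < 1 / 3) :
    √(1 + ε) / (1 - ε) ≤ 1 + 2.5 * ε := by
  rw [div_le_iff₀ (by linarith), Real.sqrt_le_iff]
  refine ⟨by nlinarith, ?_⟩
  nlinarith [mul_nonneg hε0 (by linarith : (0 : ℝ) ≤ 1 / 3 - ε),
    mul_nonneg (mul_nonneg hε0 hε0) (by linarith : (0 : ℝ) ≤ 1 / 3 - ε), pow_nonneg hε0 4]

/-- bound on the first term θ₁. -/
theorem statement2 (n d k ρ t : ℕ) (hkn : k < n) (hkd : k < d)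
    (ε γ : ℝ) (hε0 : 0 < ε) (hε : ε < 1 / 3) (hγ : 1 ≤ γ)
    (A : Matrix (Fin n) (Fin d) ℝ)
    (U : Matrix (Fin n) (Fin n) ℝ) (W : Matrix (Fin d) (Fin d) ℝ) (σ : ℕ → ℝ)
    (hU : Uᵀ * U = 1) (hW : Wᵀ * W = 1)
    (hmono : ∀ i j : ℕ, i ≤ j → σ j ≤ σ i)
    (hzero : ∀ i : ℕ, ρ ≤ i → σ i = 0)
    (hA : A = U * (Matrix.of fun (i : Fin n) (j : Fin d) =>
      if (i : ℕ) = (j : ℕ) then σ i else 0) * Wᵀ)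
    (Ak : Matrix (Fin n) (Fin d) ℝ)
    (hAk : Ak = U * (Matrix.of fun (i : Fin n) (j : Fin d) =>
      if (i : ℕ) = (j : ℕ) ∧ (i : ℕ) < k then σ i else 0) * Wᵀ)
    (Vk : Matrix (Fin d) (Fin k) ℝ)
    (hVk : Vk = W.submatrix id (Fin.castLE (by omega)))
    (R : Matrix (Fin d) (Fin t) ℝ)
    (Xopt : Matrix (Fin n) (Fin k) ℝ) (hXopt : IsIndicator Xopt)
    (P : Matrix (Fin t) (Fin k) ℝ)
    (ha2 : specNorm P ≤ 1 / (1 - ε))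
    (hb : frobNorm (Ak - A * R * P * Vkᵀ) ≤ 4 * ε * frobNorm (A - Ak))
    (hc : frobNorm ((1 - Xopt * Xoptᵀ) * (A * R)) ≤
      Real.sqrt (1 + ε) * frobNorm ((1 - Xopt * Xoptᵀ) * A))
    (Xt : Matrix (Fin n) (Fin k) ℝ) (hXt : IsIndicator Xt)
    (hXtγ : frobNorm ((1 - Xt * Xtᵀ) * (A * R)) ^ 2 ≤
      γ * frobNorm ((1 - Xopt * Xoptᵀ) * (A * R)) ^ 2) :
    frobNorm ((1 - Xt * Xtᵀ) * Ak) ≤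
      Real.sqrt γ * (1 + 6.5 * ε) * frobNorm ((1 - Xopt * Xoptᵀ) * A) := by
  have hσ0 : ∀ m, 0 ≤ σ m := fun m =>
    (hzero _ (le_max_right m ρ)).symm.le.trans (hmono m _ (le_max_left m ρ))
  have hVV : Vkᵀ * Vk = 1 := hVk ▸ submatrix_id_transpose_mul_self hW (Fin.castLE_injective _)
  have hEY : frobNorm (A - Ak) ≤ frobNorm ((1 - Xopt * Xoptᵀ) * A) := by
    rw [hA, hAk, ← rectDiagonal_ite_lt]
    exact frobNorm_sub_truncation_le hU hW hmono hσ0 hkn.le hXopt.mul_transpose_mul_self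
      hXopt.trace_transpose_mul_self_le
  set F := frobNorm ((1 - Xopt * Xoptᵀ) * A)
  have hXtAR : frobNorm ((1 - Xt * Xtᵀ) * (A * R)) ≤ √γ * (√(1 + ε) * F) :=
    (frobNorm_le_sqrt_mul_of_sq_le hXtγ).trans (mul_le_mul_of_nonneg_left hc (Real.sqrt_nonneg γ))
  have hF : 0 ≤ F := frobNorm_nonneg _
  have hγ' : 1 ≤ √γ := Real.one_le_sqrt.mpr hγ
  calc frobNorm ((1 - Xt * Xtᵀ) * Ak)
      ≤ specNorm P * frobNorm ((1 - Xt * Xtᵀ) * (A * R)) + frobNorm (Ak - A * R * P * Vkᵀ) :=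
        frobNorm_one_sub_mul_le_specNorm_mul_add hXt.mul_transpose_mul_self hVV _ _ _
    _ ≤ 1 / (1 - ε) * (√γ * (√(1 + ε) * F)) + 4 * ε * F :=
        add_le_add (mul_le_mul ha2 hXtAR (frobNorm_nonneg _) (div_nonneg zero_le_one (by linarith)))
          (hb.trans (mul_le_mul_of_nonneg_left hEY (by linarith)))
    _ = √γ * (√(1 + ε) / (1 - ε)) * F + 1 * (4 * ε) * F := by ring
    _ ≤ √γ * (1 + 2.5 * ε) * F + √γ * (4 * ε) * F := by
        gcongr
        exact Real.sqrt_one_add_div_one_sub_le hε0.le hε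
    _ = √γ * (1 + 6.5 * ε) * F := by ring
end

section
/- Let t ≥ 1 and let R be a d×t random matrix whose entries are i.i.d., each equal to +1/√t or −1/√t with probability 1/2. Then for any real matrix C ∈ ℝ^{n×d}, Var(‖CR‖_F²) ≤ (2/t)·‖C‖_F⁴. -/
open MeasureTheory
open scoped Matrix

open Finset ProbabilityTheory
open scoped BigOperators Kronecker

/-! Flattening the sign pattern `ω : Fin d × Fin t → Bool` into the sign vector `ε`, one has
`‖C R‖_F² = εᵀ A ε` with `A = t⁻¹ (CᵀC ⊗ I_t)`. For any square matrix `A` the diagonal part of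
this quadratic form is constant because `ε_p² = 1`, and for `p ≠ q`, `r ≠ s` the moment
`E[ε_p ε_q ε_r ε_s]` vanishes unless `{p, q} = {r, s}` (flipping a sign that occurs only once
negates the integrand). Hence `Var(εᵀ A ε) ≤ 2 ‖A‖_F²`, and here
`‖A‖_F² = ‖CᵀC‖_F² / t ≤ ‖C‖_F⁴ / t`. -/

lemma integral_uniformOfFintype {Ω : Type*} [Fintype Ω] [Nonempty Ω] [MeasurableSpace Ω]
    [MeasurableSingletonClass Ω] (f : Ω → ℝ) :
    ∫ ω, f ω ∂(PMF.uniformOfFintype Ω).toMeasure = 𝔼 ω, f ω := by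
  rw [PMF.integral_eq_sum, Fintype.expect_eq_sum_div_card, sum_div]
  simp [PMF.uniformOfFintype_apply, div_eq_inv_mul]

lemma measurePreserving_uniformOfFintype_equiv {α β : Type*} [Fintype α] [Nonempty α]
    [MeasurableSpace α] [MeasurableSingletonClass α] [Fintype β] [Nonempty β]
    [MeasurableSpace β] [MeasurableSingletonClass β] (e : α ≃ β) :
    MeasurePreserving e (PMF.uniformOfFintype α).toMeasure (PMF.uniformOfFintype β).toMeasure := by
  refine ⟨.of_discrete, Measure.ext_of_singleton fun b => ?_⟩
  rw [Measure.map_apply .of_discrete (.singleton b), ← e.image_symm_eq_preimage,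
    Set.image_singleton, PMF.toMeasure_apply_singleton _ _ (.singleton _),
    PMF.toMeasure_apply_singleton _ _ (.singleton _), PMF.uniformOfFintype_apply,
    PMF.uniformOfFintype_apply, Fintype.card_congr e]

noncomputable def boolSign (b : Bool) : ℝ := if b then 1 else -1

lemma boolSign_mul_self (b : Bool) : boolSign b * boolSign b = 1 := by
  cases b <;> simp [boolSign]

lemma boolSign_not (b : Bool) : boolSign (!b) = -boolSign b := by
  cases b <;> simp [boolSign]

section SignPatterns

variable {ι : Type*} [Fintype ι]

lemma sum_mul_transpose_le_sum_sq (B : Matrix ι ι ℝ) :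
    ∑ p, ∑ q, B p q * B q p ≤ ∑ p, ∑ q, B p q ^ 2 := by
  calc ∑ p, ∑ q, B p q * B q p ≤ ∑ p, ∑ q, (B p q ^ 2 + B q p ^ 2) / 2 := by
        gcongr with p _ q _
        nlinarith [sq_nonneg (B p q - B q p)]
    _ = ∑ p, ∑ q, B p q ^ 2 := by
        simp only [add_div, sum_add_distrib, ← sum_div]
        rw [sum_comm (f := fun p q => B q p ^ 2)]
        ring

variable [DecidableEq ι]

lemma expect_boolSign_mul_eq_zero (p : ι) (g : (ι → Bool) → ℝ)
    (hg : ∀ ω b, g (Function.update ω p b) = g ω) :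
    𝔼 ω, boolSign (ω p) * g ω = 0 := by
  let flip : (ι → Bool) → ι → Bool := fun ω => Function.update ω p (!ω p)
  have hflip : Function.Involutive flip := fun ω => by simp [flip]
  have h : 𝔼 ω, boolSign (ω p) * g ω = -𝔼 ω, boolSign (ω p) * g ω := by
    rw [← expect_neg_distrib]
    exact Fintype.expect_equiv hflip.toPerm _ _ fun ω => by simp [flip, boolSign_not, hg]
  linarith

lemma expect_boolSign_four_of_ne {p q r s : ι} (hpq : p ≠ q) (hrs : r ≠ s) :
    𝔼 ω : ι → Bool, boolSign (ω p) * boolSign (ω q) * (boolSign (ω r) * boolSign (ω s)) =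
      (if p = r ∧ q = s then 1 else 0) + (if p = s ∧ q = r then 1 else 0) := by
  by_cases hpair : (p = r ∧ q = s) ∨ (p = s ∧ q = r)
  · have hone : ∀ ω : ι → Bool,
        boolSign (ω p) * boolSign (ω q) * (boolSign (ω r) * boolSign (ω s)) = 1 := by
      intro ω
      rcases hpair with ⟨rfl, rfl⟩ | ⟨rfl, rfl⟩ <;>
        linear_combination
          boolSign (ω p) * boolSign (ω p) * boolSign_mul_self (ω q) + boolSign_mul_self (ω p)
    simp only [hone, Fintype.expect_const]
    rcases hpair with ⟨rfl, rfl⟩ | ⟨rfl, rfl⟩ <;> simp [hpq, hpq.symm]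
  · rw [if_neg (by tauto), if_neg (by tauto), zero_add]
    have hlonely : (p ≠ r ∧ p ≠ s) ∨ (q ≠ r ∧ q ≠ s) := by grind
    rcases hlonely with ⟨hpr, hps⟩ | ⟨hqr, hqs⟩
    · refine Eq.trans (expect_congr rfl fun ω _ => by ring) (expect_boolSign_mul_eq_zero p
        (fun ω => boolSign (ω q) * (boolSign (ω r) * boolSign (ω s))) fun ω b => ?_)
      simp [hpq.symm, hpr.symm, hps.symm]
    · refine Eq.trans (expect_congr rfl fun ω _ => by ring) (expect_boolSign_mul_eq_zero q
        (fun ω => boolSign (ω p) * (boolSign (ω r) * boolSign (ω s))) fun ω b => ?_)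
      simp [hpq, hqr.symm, hqs.symm]

lemma expect_sq_quadForm (B : Matrix ι ι ℝ) (hB : ∀ p, B p p = 0) :
    𝔼 ω : ι → Bool, (∑ p, ∑ q, B p q * boolSign (ω p) * boolSign (ω q)) ^ 2 =
      ∑ p, ∑ q, B p q * (B p q + B q p) := by
  have hterm : ∀ p q r s, 𝔼 ω : ι → Bool,
      B p q * boolSign (ω p) * boolSign (ω q) * (B r s * boolSign (ω r) * boolSign (ω s)) =
        B p q * B r s * ((if p = r ∧ q = s then 1 else 0) + (if p = s ∧ q = r then 1 else 0)) := by
    intro p q r s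
    by_cases hpq : p = q
    · simp [hpq, hB]
    by_cases hrs : r = s
    · simp [hrs, hB]
    rw [← expect_boolSign_four_of_ne hpq hrs, mul_expect]
    exact expect_congr rfl fun ω _ => by ring
  simp_rw [sq, sum_mul_sum, expect_sum_comm, hterm]
  simp [mul_add, sum_add_distrib, ite_and]

theorem variance_quadForm_le (A : Matrix ι ι ℝ) :
    Var[fun ω => ∑ p, ∑ q, A p q * boolSign (ω p) * boolSign (ω q);
      (PMF.uniformOfFintype (ι → Bool)).toMeasure] ≤ 2 * ∑ p, ∑ q, A p q ^ 2 := by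
  let B : Matrix ι ι ℝ := fun p q => if p = q then 0 else A p q
  have hsplit : ∀ ω : ι → Bool, ∑ p, ∑ q, A p q * boolSign (ω p) * boolSign (ω q) =
      ∑ p, A p p + ∑ p, ∑ q, B p q * boolSign (ω p) * boolSign (ω q) := by
    intro ω
    have hterm : ∀ p q, A p q * boolSign (ω p) * boolSign (ω q) =
        (if p = q then A p p else 0) + B p q * boolSign (ω p) * boolSign (ω q) := by
      intro p q
      by_cases hpq : p = q
      · subst hpq; simp [B, mul_assoc, boolSign_mul_self]
      · simp [B, hpq]
    simp only [hterm, sum_add_distrib, sum_ite_eq, mem_univ, if_true]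
  simp_rw [hsplit]
  calc _ = Var[fun ω => ∑ p, ∑ q, B p q * boolSign (ω p) * boolSign (ω q);
        (PMF.uniformOfFintype (ι → Bool)).toMeasure] :=
        variance_const_add .of_discrete _
    _ ≤ 𝔼 ω : ι → Bool, (∑ p, ∑ q, B p q * boolSign (ω p) * boolSign (ω q)) ^ 2 := by
        rw [← integral_uniformOfFintype]
        exact variance_le_expectation_sq .of_discrete
    _ = ∑ p, ∑ q, B p q ^ 2 + ∑ p, ∑ q, B p q * B q p := by
        rw [expect_sq_quadForm B fun p => if_pos rfl]
        simp only [mul_add, sum_add_distrib, sq]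
    _ ≤ 2 * ∑ p, ∑ q, B p q ^ 2 := by linarith [sum_mul_transpose_le_sum_sq B]
    _ ≤ 2 * ∑ p, ∑ q, A p q ^ 2 := by
        gcongr 2 * ∑ p, ∑ q, ?_ with p _ q _
        by_cases hpq : p = q <;> simp [B, hpq, sq_nonneg]

end SignPatterns

lemma frobNorm_sq {m n : ℕ} (M : Matrix (Fin m) (Fin n) ℝ) :
    frobNorm M ^ 2 = ∑ i, ∑ j, M i j ^ 2 :=
  Real.sq_sqrt (by positivity)

section Frobenius

attribute [local instance] Matrix.frobeniusNormedAddCommGroup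

lemma frobNorm_eq_norm {m n : ℕ} (M : Matrix (Fin m) (Fin n) ℝ) : frobNorm M = ‖M‖ := by
  rw [frobNorm, Matrix.frobenius_norm_def, Real.sqrt_eq_rpow]
  simp [Real.norm_eq_abs, sq_abs]

lemma frobNorm_transpose_mul_self_le {m n : ℕ} (C : Matrix (Fin m) (Fin n) ℝ) :
    frobNorm (Cᵀ * C) ≤ frobNorm C ^ 2 := by
  simpa [frobNorm_eq_norm, Matrix.frobenius_norm_transpose, sq] using
    Matrix.frobenius_norm_mul Cᵀ C

end Frobenius

lemma frobNorm_mul_sq_eq_sum_kronecker {n d t : ℕ} (C : Matrix (Fin n) (Fin d) ℝ)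
    (R : Matrix (Fin d) (Fin t) ℝ) :
    frobNorm (C * R) ^ 2 =
      ∑ p, ∑ q, ((Cᵀ * C) ⊗ₖ (1 : Matrix (Fin t) (Fin t) ℝ)) p q * R p.1 p.2 * R q.1 q.2 := by
  rw [frobNorm_sq]
  simp only [Matrix.mul_apply, sq, sum_mul_sum, Fintype.sum_prod_type, Matrix.kronecker_apply,
    Matrix.one_apply, Matrix.transpose_apply, mul_ite, ite_mul, mul_one, mul_zero, zero_mul,
    sum_ite_eq, mem_univ, if_true]
  calc _ = ∑ j, ∑ k, ∑ l, ∑ i, C i k * C i l * R k j * R l j := by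
        rw [sum_comm]
        refine sum_congr rfl fun j _ => ?_
        rw [sum_comm]
        refine sum_congr rfl fun k _ => ?_
        rw [sum_comm]
        exact sum_congr rfl fun l _ => sum_congr rfl fun i _ => by ring
    _ = _ := by
        rw [sum_comm]
        simp_rw [sum_mul]

lemma sum_sq_kronecker_one {ι κ : Type*} [Fintype ι] [Fintype κ] [DecidableEq κ]
    (G : Matrix ι ι ℝ) :
    ∑ p, ∑ q, (G ⊗ₖ (1 : Matrix κ κ ℝ)) p q ^ 2 = Fintype.card κ * ∑ k, ∑ l, G k l ^ 2 := by
  simp [Fintype.sum_prod_type, Matrix.one_apply, mul_sum]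

lemma signMatrix_apply_mul_apply {d t : ℕ} (ω : Fin d → Fin t → Bool) (k l : Fin d)
    (j j' : Fin t) :
    signMatrix d t ω k j * signMatrix d t ω l j' =
      (t : ℝ)⁻¹ * (boolSign (ω k j) * boolSign (ω l j')) := by
  rw [signMatrix, Matrix.of_apply, Matrix.of_apply, div_mul_div_comm,
    Real.mul_self_sqrt t.cast_nonneg, div_eq_inv_mul]
  rfl

theorem statement9_general (d t n : ℕ) (C : Matrix (Fin n) (Fin d) ℝ) :
    ProbabilityTheory.variance (fun ω => frobNorm (C * signMatrix d t ω) ^ 2)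
        (signMeasure d t) ≤
      2 / (t : ℝ) * frobNorm C ^ 4 := by
  set A : Matrix (Fin d × Fin t) (Fin d × Fin t) ℝ :=
    (t : ℝ)⁻¹ • ((Cᵀ * C) ⊗ₖ (1 : Matrix (Fin t) (Fin t) ℝ))
  have hform : ∀ ω : Fin d × Fin t → Bool,
      frobNorm (C * signMatrix d t (Equiv.curry (Fin d) (Fin t) Bool ω)) ^ 2 =
        ∑ p, ∑ q, A p q * boolSign (ω p) * boolSign (ω q) := by
    intro ω
    simp only [frobNorm_mul_sq_eq_sum_kronecker, mul_assoc, signMatrix_apply_mul_apply, A,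
      Matrix.smul_apply, smul_eq_mul, Equiv.curry_apply, Function.curry_apply]
    exact sum_congr rfl fun p _ => sum_congr rfl fun q _ => by ring
  have hcurry : MeasurePreserving (Equiv.curry (Fin d) (Fin t) Bool)
      (PMF.uniformOfFintype (Fin d × Fin t → Bool)).toMeasure (signMeasure d t) :=
    measurePreserving_uniformOfFintype_equiv _
  rw [← hcurry.variance_fun_comp .of_discrete]
  simp_rw [hform]
  calc _ ≤ 2 * ∑ p, ∑ q, A p q ^ 2 := variance_quadForm_le A
    _ = 2 / t * frobNorm (Cᵀ * C) ^ 2 := by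
        simp only [A, Matrix.smul_apply, smul_eq_mul, mul_pow, ← mul_sum, sum_sq_kronecker_one,
          frobNorm_sq, Fintype.card_fin]
        rcases eq_or_ne (t : ℝ) 0 with ht | ht
        · simp [ht]
        · field_simp
    _ ≤ 2 / t * frobNorm C ^ 4 := by
        rw [show frobNorm C ^ 4 = (frobNorm C ^ 2) ^ 2 by ring]
        gcongr
        · exact Real.sqrt_nonneg _
        · exact frobNorm_transpose_mul_self_le C

/-- variance of the squared Frobenius norm after projection. -/
theorem statement9 (d t n : ℕ) (ht : 1 ≤ t) (C : Matrix (Fin n) (Fin d) ℝ) :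
    ProbabilityTheory.variance (fun ω => frobNorm (C * signMatrix d t ω) ^ 2)
        (signMeasure d t) ≤
      2 / (t : ℝ) * frobNorm C ^ 4 :=
  statement9_general d t n C
end

section
/- Let ε ∈ (0,1/3), let A be an n×d real matrix of rank ρ, let k < ρ, let A_k = U_kΣ_kV_kᵀ be the truncated SVD of A with A_{ρ−k} = A − A_k, and let R be a d×t real matrix such that: (a) V_kᵀR has rank k; (b) ‖A_{ρ−k}RRᵀV_k‖_F ≤ 0.5ε·‖A_{ρ−k}‖_F; (c) ‖A_{ρ−k}R‖_F ≤ √(1+ε)·‖A_{ρ−k}‖_F; and (d) ‖(V_kᵀR)⁺ − (V_kᵀR)ᵀ‖₂ ≤ 3ε. Then A_k = AR(V_kᵀR)⁺V_kᵀ + E, where the n×d matrix E satisfies ‖E‖_F ≤ 4ε·‖A − A_k‖_F. -/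
open MeasureTheory
open scoped Matrix

/-!
Since `Vₖᵀ Vₖ = 1`, `Aₖ Vₖ Vₖᵀ = Aₖ`, and full row rank makes `P = (Vₖᵀ R)⁺` a right
inverse of `Vₖᵀ R`, the approximation is exact on the top singular subspace:
`Aₖ R P Vₖᵀ = Aₖ`, so `E = -(A - Aₖ) R P Vₖᵀ`. Right multiplication by `Vₖᵀ` does not
increase the Frobenius norm, and writing `P = Rᵀ Vₖ + (P - (Vₖᵀ R)ᵀ)` bounds `‖E‖_F` by

  `‖A_{ρ-k} R Rᵀ Vₖ‖_F + ‖A_{ρ-k} R‖_F ‖P - (Vₖᵀ R)ᵀ‖₂ ≤ (ε/2 + 3ε √(1+ε)) ‖A_{ρ-k}‖_F`,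

which is at most `4ε ‖A_{ρ-k}‖_F` since `√(1+ε) ≤ 7/6` for `ε < 1/3`.
-/

namespace Matrix

variable {l m n o p q R : Type*}

theorem mul_eq_one_of_mul_mul_eq_self_of_rank_eq {K : Type*} [Field K] [Fintype m] [Fintype n]
    [DecidableEq m] {M : Matrix m n K} {P : Matrix n m K} (hMPM : M * P * M = M)
    (hrank : M.rank = Fintype.card m) : M * P = 1 := by
  have hsurj : Function.Surjective M.mulVec := by
    have htop : LinearMap.range M.mulVecLin = ⊤ :=
      Submodule.eq_top_of_finrank_eq (by rw [← rank, hrank, Module.finrank_fintype_fun_eq_card])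
    exact LinearMap.range_eq_top.mp htop
  refine ext_iff_mulVec.mpr fun v => ?_
  obtain ⟨w, rfl⟩ := hsurj v
  rw [mulVec_mulVec, hMPM, one_mulVec]

theorem transpose_mul_submatrix_eq_one [CommSemiring R] [Fintype m] [DecidableEq n]
    [DecidableEq o] {W : Matrix m n R} (hW : Wᵀ * W = 1) {f : o → n} (hf : f.Injective) :
    (W.submatrix id f)ᵀ * W.submatrix id f = 1 := by
  rw [transpose_submatrix, ← submatrix_mul _ _ _ _ _ Function.bijective_id, hW,
    submatrix_one f hf]

theorem submatrix_mul_submatrix_of_forall_notMem_range [CommSemiring R] [Fintype n] [Fintype o]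
    {X : Matrix l n R} {Y : Matrix n m R} {f : o → n} (hf : f.Injective)
    (hX : ∀ i j, j ∉ Set.range f → X i j = 0) :
    X.submatrix id f * Y.submatrix f id = X * Y := by
  ext i j
  exact Fintype.sum_of_injective f hf _ _ (fun c hc => by simp [hX i c hc]) fun _ => rfl

theorem mul_submatrix_mul_transpose_eq_self [CommSemiring R] [Fintype m] [Fintype n]
    [Fintype o] [Fintype p] [DecidableEq n] {U : Matrix l p R} {S : Matrix p n R} {W : Matrix m n R}
    (hW : Wᵀ * W = 1) {f : o → n} (hf : f.Injective)
    (hS : ∀ i j, j ∉ Set.range f → S i j = 0) :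
    U * S * Wᵀ * W.submatrix id f * (W.submatrix id f)ᵀ = U * S * Wᵀ := by
  have hSW : S * Wᵀ * W.submatrix id f = S.submatrix id f := by
    rw [← submatrix_id_id (S * Wᵀ), ← submatrix_mul _ _ _ _ _ Function.bijective_id,
      Matrix.mul_assoc, hW, Matrix.mul_one]
  calc U * S * Wᵀ * W.submatrix id f * (W.submatrix id f)ᵀ
      = U * (S * Wᵀ * W.submatrix id f * Wᵀ.submatrix f id) := by
        simp only [transpose_submatrix, Matrix.mul_assoc]
    _ = U * S * Wᵀ := by
        rw [hSW, submatrix_mul_submatrix_of_forall_notMem_range hf hS, Matrix.mul_assoc]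

theorem mul_mul_mul_eq_self_of_mul_mul_eq_self [Semiring R] [Fintype m] [Fintype o]
    [Fintype q] [DecidableEq o] {X : Matrix l m R} {V : Matrix m o R} {V' : Matrix o m R}
    {B : Matrix m q R} {P : Matrix q o R} (hX : X * V * V' = X) (hB : V' * B * P = 1) :
    X * B * P * V' = X :=
  calc X * B * P * V' = X * V * V' * B * P * V' := by rw [hX]
    _ = X * V * (V' * B * P) * V' := by simp only [Matrix.mul_assoc]
    _ = X := by rw [hB, Matrix.mul_one, hX]

end Matrix

section SpectralNorm

open scoped Matrix.Norms.L2Operator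

theorem Matrix.l2_opNorm_one_le {𝕜 ι : Type*} [RCLike 𝕜] [Fintype ι] [DecidableEq ι] :
    ‖(1 : Matrix ι ι 𝕜)‖ ≤ 1 := by
  rw [Matrix.l2_opNorm_def]
  exact ContinuousLinearMap.opNorm_le_bound _ zero_le_one fun x => by simp

variable {m n : ℕ}

theorem specNorm_eq_l2_opNorm (M : Matrix (Fin m) (Fin n) ℝ) : specNorm M = ‖M‖ := rfl

theorem specNorm_nonneg (M : Matrix (Fin m) (Fin n) ℝ) : 0 ≤ specNorm M := norm_nonneg _

theorem specNorm_transpose (M : Matrix (Fin m) (Fin n) ℝ) : specNorm Mᵀ = specNorm M :=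
  Matrix.l2_opNorm_conjTranspose M

theorem specNorm_le_one_of_transpose_mul_self_eq_one {V : Matrix (Fin m) (Fin n) ℝ}
    (hV : Vᵀ * V = 1) : specNorm V ≤ 1 := by
  have hsq : specNorm V * specNorm V ≤ 1 := by
    rw [specNorm_eq_l2_opNorm, ← Matrix.l2_opNorm_conjTranspose_mul_self]
    simpa [Matrix.conjTranspose_eq_transpose_of_trivial, hV] using Matrix.l2_opNorm_one_le
  nlinarith [specNorm_nonneg V]

theorem norm_vecMul_le_mul_specNorm (x : Fin m → ℝ) (M : Matrix (Fin m) (Fin n) ℝ) :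
    ‖WithLp.toLp 2 (x ᵥ* M)‖ ≤ ‖WithLp.toLp 2 x‖ * specNorm M := by
  rw [← Matrix.mulVec_transpose, mul_comm, ← specNorm_transpose]
  exact Matrix.l2_opNorm_mulVec Mᵀ (WithLp.toLp 2 x)

end SpectralNorm

section FrobeniusNorm

attribute [local instance] Matrix.frobeniusNormedAddCommGroup

variable {m n : ℕ}

theorem frobNorm_eq_frobenius_norm (M : Matrix (Fin m) (Fin n) ℝ) : frobNorm M = ‖M‖ := by
  simp only [frobNorm, Matrix.frobenius_norm_def, Real.sqrt_eq_rpow, Real.rpow_two,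
    Real.norm_eq_abs, sq_abs]

theorem frobNorm_nonneg (M : Matrix (Fin m) (Fin n) ℝ) : 0 ≤ frobNorm M :=
  Real.sqrt_nonneg _

theorem frobNorm_add_le (M N : Matrix (Fin m) (Fin n) ℝ) :
    frobNorm (M + N) ≤ frobNorm M + frobNorm N := by
  simpa only [frobNorm_eq_frobenius_norm] using norm_add_le M N

theorem frobNorm_neg (M : Matrix (Fin m) (Fin n) ℝ) : frobNorm (-M) = frobNorm M := by
  simp only [frobNorm_eq_frobenius_norm, norm_neg]

theorem frobNorm_eq_sqrt_sum_norm_row_sq (M : Matrix (Fin m) (Fin n) ℝ) :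
    frobNorm M = √(∑ i, ‖WithLp.toLp 2 (M i)‖ ^ 2) := by
  simp only [frobNorm, EuclideanSpace.norm_sq_eq, Real.norm_eq_abs, sq_abs]

theorem frobNorm_mul_le_mul_specNorm {l : ℕ} (X : Matrix (Fin m) (Fin n) ℝ)
    (D : Matrix (Fin n) (Fin l) ℝ) : frobNorm (X * D) ≤ frobNorm X * specNorm D := by
  rw [frobNorm_eq_sqrt_sum_norm_row_sq, frobNorm_eq_sqrt_sum_norm_row_sq,
    ← Real.sqrt_sq (specNorm_nonneg D), ← Real.sqrt_mul (by positivity), Finset.sum_mul]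
  gcongr with i
  rw [← mul_pow]
  gcongr
  exact norm_vecMul_le_mul_specNorm (X i) D

theorem frobNorm_mul_transpose_le {k : ℕ} (M : Matrix (Fin m) (Fin k) ℝ)
    {V : Matrix (Fin n) (Fin k) ℝ} (hV : Vᵀ * V = 1) : frobNorm (M * Vᵀ) ≤ frobNorm M :=
  calc frobNorm (M * Vᵀ) ≤ frobNorm M * specNorm Vᵀ := frobNorm_mul_le_mul_specNorm M Vᵀ
    _ ≤ frobNorm M := by
      rw [specNorm_transpose]
      exact mul_le_of_le_one_right (frobNorm_nonneg M)
        (specNorm_le_one_of_transpose_mul_self_eq_one hV)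

end FrobeniusNorm

theorem frobNorm_mul_mul_mul_transpose_le {n d k t : ℕ} (B : Matrix (Fin n) (Fin d) ℝ)
    (R : Matrix (Fin d) (Fin t) ℝ) (P : Matrix (Fin t) (Fin k) ℝ) {V : Matrix (Fin d) (Fin k) ℝ}
    (hV : Vᵀ * V = 1) :
    frobNorm (B * R * P * Vᵀ) ≤
      frobNorm (B * R * Rᵀ * V) + frobNorm (B * R) * specNorm (P - (Vᵀ * R)ᵀ) :=
  calc frobNorm (B * R * P * Vᵀ) ≤ frobNorm (B * R * P) := frobNorm_mul_transpose_le _ hV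
    _ = frobNorm (B * R * Rᵀ * V + B * R * (P - (Vᵀ * R)ᵀ)) := by
        rw [Matrix.transpose_mul, Matrix.transpose_transpose, Matrix.mul_sub,
          ← Matrix.mul_assoc (B * R), add_sub_cancel]
    _ ≤ frobNorm (B * R * Rᵀ * V) + frobNorm (B * R * (P - (Vᵀ * R)ᵀ)) := frobNorm_add_le _ _
    _ ≤ frobNorm (B * R * Rᵀ * V) + frobNorm (B * R) * specNorm (P - (Vᵀ * R)ᵀ) := by
        gcongr
        exact frobNorm_mul_le_mul_specNorm _ _

/-- Lemma 5 (matrix decomposition A_k = AR(V_kᵀR)⁺V_kᵀ + E). -/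
theorem statement14 (n d k ρ t : ℕ) (hkρ : k < ρ) (hρd : ρ ≤ d)
    (ε : ℝ) (hε : ε < 1 / 3)
    (A : Matrix (Fin n) (Fin d) ℝ)
    (U : Matrix (Fin n) (Fin n) ℝ) (W : Matrix (Fin d) (Fin d) ℝ) (σ : ℕ → ℝ)
    (hW : Wᵀ * W = 1)
    (Ak : Matrix (Fin n) (Fin d) ℝ)
    (hAk : Ak = U * (Matrix.of fun (i : Fin n) (j : Fin d) =>
      if (i : ℕ) = (j : ℕ) ∧ (i : ℕ) < k then σ i else 0) * Wᵀ)
    (Vk : Matrix (Fin d) (Fin k) ℝ)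
    (hVk : Vk = W.submatrix id (Fin.castLE (by omega)))
    (R : Matrix (Fin d) (Fin t) ℝ)
    (hrank : (Vkᵀ * R).rank = k)
    (hb : frobNorm ((A - Ak) * R * Rᵀ * Vk) ≤ 0.5 * ε * frobNorm (A - Ak))
    (hcc : frobNorm ((A - Ak) * R) ≤ Real.sqrt (1 + ε) * frobNorm (A - Ak))
    (P : Matrix (Fin t) (Fin k) ℝ) (hP : IsMoorePenrose (Vkᵀ * R) P)
    (hd : specNorm (P - (Vkᵀ * R)ᵀ) ≤ 3 * ε) :
    ∃ E : Matrix (Fin n) (Fin d) ℝ,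
      Ak = A * R * P * Vkᵀ + E ∧ frobNorm E ≤ 4 * ε * frobNorm (A - Ak) := by
  have hkd : k ≤ d := by omega
  have hf : (Fin.castLE hkd).Injective := Fin.castLE_injective hkd
  have hVk_orth : Vkᵀ * Vk = 1 := hVk ▸ Matrix.transpose_mul_submatrix_eq_one hW hf
  have hAk_proj : Ak * Vk * Vkᵀ = Ak := by
    subst hAk hVk
    refine Matrix.mul_submatrix_mul_transpose_eq_self hW hf fun i j hj => if_neg ?_
    rintro ⟨hij, hik⟩
    exact hj ⟨⟨j, hij ▸ hik⟩, rfl⟩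
  have hVkRP : Vkᵀ * R * P = 1 :=
    Matrix.mul_eq_one_of_mul_mul_eq_self_of_rank_eq hP.1 (by rw [hrank, Fintype.card_fin])
  have hAkRP : Ak * R * P * Vkᵀ = Ak :=
    Matrix.mul_mul_mul_eq_self_of_mul_mul_eq_self hAk_proj hVkRP
  refine ⟨Ak - A * R * P * Vkᵀ, (add_sub_cancel _ _).symm, ?_⟩
  have hε0 : 0 ≤ ε := by linarith [specNorm_nonneg (P - (Vkᵀ * R)ᵀ)]
  have hF : 0 ≤ frobNorm (A - Ak) := frobNorm_nonneg _
  have hsqrt : √(1 + ε) ≤ 7 / 6 := Real.sqrt_le_iff.mpr ⟨by norm_num, by linarith⟩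
  calc frobNorm (Ak - A * R * P * Vkᵀ) = frobNorm ((A - Ak) * R * P * Vkᵀ) := by
        rw [← frobNorm_neg, neg_sub, Matrix.sub_mul, Matrix.sub_mul, Matrix.sub_mul, hAkRP]
    _ ≤ frobNorm ((A - Ak) * R * Rᵀ * Vk) +
          frobNorm ((A - Ak) * R) * specNorm (P - (Vkᵀ * R)ᵀ) :=
        frobNorm_mul_mul_mul_transpose_le _ _ _ hVk_orth
    _ ≤ 0.5 * ε * frobNorm (A - Ak) + (7 / 6 * frobNorm (A - Ak)) * (3 * ε) := by
        gcongr
        · exact specNorm_nonneg _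
        · exact hcc.trans (by gcongr)
    _ = 4 * ε * frobNorm (A - Ak) := by ring
end
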